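/- arXiv:2312.13262 — 5 statements merged into one kernel-verified Lean document; each statement's English description precedes it below -/
import Mathlib

section
/- Let A be a commutative ring, N a finitely presented A-module, and (I_j)_{j ∈ ι} a family of ideals of A. Then the natural map N ⊗_A (∏_j A/I_j) → ∏_j (N ⊗_A A/I_j) is an isomorphism. -/
/-!
Both `N ↦ N ⊗ ∏ᵢ Mᵢ` and `N ↦ ∏ᵢ (N ⊗ Mᵢ)` are right exact, and the natural map between them is an
isomorphism for `N = Rⁿ`. Hence it is onto for finitely generated `N`, and for a presentation
`0 → K → Rⁿ → N → 0` with `K` finitely generated the five lemma makes it bijective.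
-/

theorem Function.Exact.piMap {ι : Type*} {α β γ : ι → Type*} [∀ i, Zero (γ i)]
    {f : ∀ i, α i → β i} {g : ∀ i, β i → γ i} (h : ∀ i, Function.Exact (f i) (g i)) :
    Function.Exact (Pi.map f) (Pi.map g) := fun y => by
  simp only [funext_iff, Pi.map_apply, Pi.zero_apply, h _ _, Set.mem_range]
  exact ⟨fun hy => ⟨fun i => (hy i).choose, fun i => (hy i).choose_spec⟩,
    fun ⟨x, hx⟩ i => ⟨x i, hx i⟩⟩

namespace TensorProduct

section CommSemiring

variable {R : Type*} [CommSemiring R] {ι : Type*} (M : ι → Type*)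
  [∀ i, AddCommMonoid (M i)] [∀ i, Module R (M i)]

theorem piRightHom_naturality {N N' : Type*} [AddCommMonoid N] [Module R N]
    [AddCommMonoid N'] [Module R N'] (f : N →ₗ[R] N') :
    LinearMap.piMap (fun i => f.rTensor (M i)) ∘ₗ piRightHom R R N M =
      piRightHom R R N' M ∘ₗ f.rTensor (∀ i, M i) :=
  ext' fun _ _ => rfl

theorem piRightHom_bijective_of_fintype (κ : Type*) [Fintype κ] [DecidableEq κ] :
    Function.Bijective (piRightHom R R (κ → R) M) := by
  let e : ∀ i, (κ → R) ⊗[R] M i ≃ₗ[R] (κ → M i) := fun i =>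
    TensorProduct.comm R _ _ ≪≫ₗ piScalarRight R R (M i) κ
  let e' := TensorProduct.comm R _ _ ≪≫ₗ piScalarRight R R (∀ i, M i) κ
  let swap : (κ → ∀ i, M i) →ₗ[R] ∀ i, κ → M i :=
    LinearMap.pi fun i => LinearMap.pi fun k => LinearMap.proj i ∘ₗ LinearMap.proj k
  have h : LinearMap.piMap (fun i => (e i).toLinearMap) ∘ₗ piRightHom R R (κ → R) M =
      swap ∘ₗ e'.toLinearMap :=
    ext' fun _ _ => rfl
  have : Function.Bijective
      (LinearMap.piMap (fun i => (e i).toLinearMap) ∘ₗ piRightHom R R (κ → R) M) := by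
    rw [h]
    exact (Equiv.piComm _).bijective.comp e'.bijective
  exact ((Function.Bijective.piMap fun i => (e i).bijective).of_comp_iff' _).mp this

theorem piRightHom_surjective_of_finite (N : Type*) [AddCommMonoid N] [Module R N]
    [Module.Finite R N] : Function.Surjective (piRightHom R R N M) := by
  obtain ⟨n, p, hp⟩ := Module.Finite.exists_fin' R N
  refine Function.Surjective.of_comp (g := p.rTensor (∀ i, M i)) ?_
  rw [← LinearMap.coe_comp, ← piRightHom_naturality, LinearMap.coe_comp, LinearMap.coe_piMap]
  exact (Function.Surjective.piMap fun i => p.rTensor_surjective _ hp).comp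
    (piRightHom_bijective_of_fintype M (Fin n)).surjective

end CommSemiring

theorem piRightHom_bijective_of_finitePresentation {R : Type*} [CommRing R] {ι : Type*}
    (M : ι → Type*) [∀ i, AddCommGroup (M i)] [∀ i, Module R (M i)]
    (N : Type*) [AddCommGroup N] [Module R N] [Module.FinitePresentation R N] :
    Function.Bijective (piRightHom R R N M) := by
  obtain ⟨n, p, hp⟩ := Module.Finite.exists_fin' R N
  have : Module.Finite R (LinearMap.ker p) :=
    Module.Finite.iff_fg.mpr (Module.FinitePresentation.fg_ker p hp)
  have hexact := p.exact_subtype_ker_map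
  exact LinearMap.bijective_of_surjective_of_bijective_of_right_exact _ _
    (.piMap fun i => (LinearMap.ker p).subtype.rTensor (M i)) (.piMap fun i => p.rTensor (M i))
    (piRightHom R R _ M) (piRightHom R R _ M) (piRightHom R R N M)
    (piRightHom_naturality M _) (piRightHom_naturality M _)
    (rTensor_exact _ hexact hp) (.piMap fun i => rTensor_exact _ hexact hp)
    (piRightHom_surjective_of_finite M _) (piRightHom_bijective_of_fintype M (Fin n))
    (p.rTensor_surjective _ hp) (.piMap fun i => p.rTensor_surjective _ hp)

end TensorProduct

/-- For a finitely presented module `N` over a commutative ring `A` and a family of ideals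
`I j`, the natural map `N ⊗[A] (∏ j, A/I j) → ∏ j, (N ⊗[A] A/I j)` is an isomorphism. -/
theorem stmt4 {A : Type*} [CommRing A] {ι : Type*} (I : ι → Ideal A)
    (N : Type*) [AddCommGroup N] [Module A N] [Module.FinitePresentation A N] :
    Function.Bijective
      (TensorProduct.piRightHom A A N (fun j => A ⧸ I j)) :=
  TensorProduct.piRightHom_bijective_of_finitePresentation _ N
end

section
/- Let (R, 𝔪) be an Artinian local ring and let φ : B → C be an injective homomorphism of R-algebras with C flat over R. Then B is flat over R if and only if the induced map B/𝔪B → C/𝔪C is injective. -/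
/-!
Over an Artinian local ring `(R, 𝔪)` the maximal ideal is nilpotent and is the annihilator of a
single element `x`. If `B` is flat, the equational criterion shows that `x • b = 0` forces
`b ∈ 𝔪B`; since `x` kills `𝔪C`, an element `b` with `φ b ∈ 𝔪C` satisfies `x • φ b = 0`, hence
`x • b = 0` and `b ∈ 𝔪B`.

Conversely, lift a basis of `B/𝔪B` to a family `v` in `B`. Injectivity of `B/𝔪B → C/𝔪C` keeps the
images of `φ ∘ v` in `C/𝔪C` linearly independent, so `φ ∘ v`, and with it `v`, is linearly
independent because `C` is flat over the local ring `R`. By Nakayama's lemma for the nilpotent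
ideal `𝔪`, `v` spans `B`. Hence `B` is free, in particular flat.
-/

open Function IsLocalRing TensorProduct Submodule

namespace Submodule

variable {R M : Type*} [CommRing R] [AddCommGroup M] [Module R M]

theorem sup_pow_smul_top_eq_top {I : Ideal R} {P : Submodule R M} (h : P ⊔ I • ⊤ = ⊤) (n : ℕ) :
    P ⊔ I ^ n • ⊤ = ⊤ := by
  induction n with
  | zero => simp
  | succ n ih =>
    refine top_le_iff.mp ?_
    calc ⊤ = P ⊔ I ^ n • (P ⊔ I • ⊤) := by rw [h, ih]
      _ = P ⊔ (I ^ n • P ⊔ I ^ (n + 1) • ⊤) := by rw [smul_sup, pow_succ, mul_smul]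
      _ ≤ P ⊔ I ^ (n + 1) • ⊤ := sup_le le_sup_left (sup_le_sup_right smul_le_right _)

theorem eq_top_of_sup_smul_top_eq_top {I : Ideal R} (hI : IsNilpotent I) {P : Submodule R M}
    (h : P ⊔ I • ⊤ = ⊤) : P = ⊤ := by
  obtain ⟨n, hn⟩ := hI
  simpa [hn] using sup_pow_smul_top_eq_top h n

theorem smul_eq_zero_of_mem_annihilator_smul_top {x : R} {m : M}
    (hm : m ∈ (R ∙ x).annihilator • (⊤ : Submodule R M)) : x • m = 0 := by
  refine smul_induction_on hm (fun r hr n _ ↦ ?_) fun a b ha hb ↦ by rw [smul_add, ha, hb, add_zero]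
  rw [smul_smul, mul_comm, ← smul_eq_mul, (mem_annihilator_span_singleton x r).mp hr, zero_smul]

end Submodule

theorem Module.Flat.mem_annihilator_smul_top_of_smul_eq_zero {R M : Type*} [CommRing R]
    [AddCommGroup M] [Module R M] [Module.Flat R M] {x : R} {m : M} (h : x • m = 0) :
    m ∈ (R ∙ x).annihilator • (⊤ : Submodule R M) := by
  obtain ⟨k, a, y, hm, ha⟩ := Module.Flat.isTrivialRelation_of_sum_smul_eq_zero
    (f := fun _ : Unit ↦ x) (x := fun _ ↦ m) (by simpa using h)
  rw [show m = _ from hm ()]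
  refine sum_mem fun j _ ↦ smul_mem_smul ?_ trivial
  simpa [mem_annihilator_span_singleton, mul_comm] using ha j

theorem IsArtinianRing.exists_annihilator_span_singleton_eq_maximalIdeal (R : Type*) [CommRing R]
    [IsArtinianRing R] [IsLocalRing R] : ∃ x : R, (R ∙ x).annihilator = maximalIdeal R := by
  obtain ⟨P, hP⟩ := associatedPrimes.nonempty R R
  obtain ⟨hprime, x, rfl⟩ := (isAssociatedPrime_iff ..).mp hP
  exact ⟨x, by rw [← bot_colon', ← eq_maximalIdeal hprime.isMaximal']⟩

theorem LinearMap.baseChange_quotient_injective {R M N : Type*} [CommRing R]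
    [AddCommGroup M] [Module R M] [AddCommGroup N] [Module R N] {I : Ideal R} {f : M →ₗ[R] N}
    (H : (I • ⊤ : Submodule R N).comap f ≤ I • ⊤) :
    Injective (f.baseChange (R ⧸ I)) := by
  rw [injective_iff_map_eq_zero]
  intro t ht
  obtain ⟨m, rfl⟩ := TensorProduct.mk_surjective R M (R ⧸ I) Ideal.Quotient.mk_surjective t
  rw [mk_apply, baseChange_tmul, ← mk_apply, ← mem_ker, ker_tensorProductMk] at ht
  rw [← mem_ker, ker_tensorProductMk]
  exact H ht

section ArtinianLocal

variable {R M N : Type*} [CommRing R] [IsArtinianRing R] [IsLocalRing R]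
  [AddCommGroup M] [Module R M] [AddCommGroup N] [Module R N]

theorem Module.Flat.comap_maximalIdeal_smul_top_le [Module.Flat R M] {f : M →ₗ[R] N}
    (hf : Function.Injective f) : (maximalIdeal R • ⊤ : Submodule R N).comap f ≤ maximalIdeal R • ⊤ := by
  intro m hm
  obtain ⟨x, hx⟩ := IsArtinianRing.exists_annihilator_span_singleton_eq_maximalIdeal R
  rw [← hx] at hm ⊢
  refine Module.Flat.mem_annihilator_smul_top_of_smul_eq_zero (hf ?_)
  rw [map_smul, smul_eq_zero_of_mem_annihilator_smul_top hm, map_zero]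

theorem Module.free_of_comap_maximalIdeal_smul_top_le [Module.Flat R N] {f : M →ₗ[R] N}
    (H : (maximalIdeal R • ⊤ : Submodule R N).comap f ≤ maximalIdeal R • ⊤) :
    Module.Free R M := by
  let w := Module.Free.chooseBasis (ResidueField R) (ResidueField R ⊗[R] M)
  obtain ⟨v, hv⟩ : ∃ v, TensorProduct.mk R (ResidueField R) M 1 ∘ v = w :=
    (TensorProduct.mk_surjective R M _ Ideal.Quotient.mk_surjective).comp_left w
  have hli : LinearIndependent R v := by
    refine LinearIndependent.of_comp f (IsLocalRing.linearIndependent_of_flat _ ?_)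
    have : TensorProduct.mk R (ResidueField R) N 1 ∘ (f ∘ v) = f.baseChange _ ∘ w := by
      ext i
      simp [← hv]
    rw [this]
    exact w.linearIndependent.map' _ (LinearMap.ker_eq_bot.mpr (f.baseChange_quotient_injective H))
  have hspan : span R (Set.range v) = ⊤ := by
    refine eq_top_of_sup_smul_top_eq_top
      ((isArtinianRing_iff_isNilpotent_maximalIdeal R).mp ‹_›) ?_
    have hker : LinearMap.ker (TensorProduct.mk R (ResidueField R) M 1) = maximalIdeal R • ⊤ :=
      LinearMap.ker_tensorProductMk M
    have hw : span R (Set.range w) = ⊤ := by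
      rw [← restrictScalars_span R (ResidueField R) Ideal.Quotient.mk_surjective, w.span_eq,
        restrictScalars_top]
    rw [← hker, ← comap_map_eq, map_span, ← Set.range_comp, hv, hw, comap_top]
  exact .of_basis (.mk hli hspan.ge)

theorem Module.flat_iff_comap_maximalIdeal_smul_top_le [Module.Flat R N] {f : M →ₗ[R] N}
    (hf : Function.Injective f) :
    Module.Flat R M ↔ (maximalIdeal R • ⊤ : Submodule R N).comap f ≤ maximalIdeal R • ⊤ :=
  ⟨fun _ ↦ Module.Flat.comap_maximalIdeal_smul_top_le hf,
    fun H ↦ have := Module.free_of_comap_maximalIdeal_smul_top_le H; inferInstance⟩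

end ArtinianLocal

theorem Ideal.quotientMap_injective_iff {R S : Type*} [CommRing R] [CommRing S] {I : Ideal R}
    {J : Ideal S} {f : R →+* S} (hIJ : I ≤ J.comap f) :
    Injective (quotientMap J f hIJ) ↔ J.comap f ≤ I := by
  refine ⟨fun h x hx ↦ ?_, quotientMap_injective'⟩
  rw [← Quotient.eq_zero_iff_mem]
  exact (injective_iff_map_eq_zero _).mp h _ (by rwa [quotientMap_mk, Quotient.eq_zero_iff_mem])

/-- Let `(R, 𝔪)` be an Artinian local ring and `φ : B → C` an injective homomorphism of
`R`-algebras with `C` flat over `R`.  Then `B` is flat over `R` iff the induced map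
`B/𝔪B → C/𝔪C` is injective. -/
theorem stmt6 {R : Type*} [CommRing R] [IsArtinianRing R] [IsLocalRing R]
    {B C : Type*} [CommRing B] [CommRing C] [Algebra R B] [Algebra R C]
    (φ : B →ₐ[R] C) (hφ : Function.Injective φ) [Module.Flat R C] :
    Module.Flat R B ↔
      Function.Injective
        (Ideal.quotientMap (I := Ideal.map (algebraMap R B) (IsLocalRing.maximalIdeal R)) (Ideal.map (algebraMap R C) (IsLocalRing.maximalIdeal R))
          φ.toRingHom
          (by
            rw [Ideal.map_le_iff_le_comap, Ideal.comap_comap]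
            have h1 : φ.toRingHom.comp (algebraMap R B) = algebraMap R C := by
              ext x; simp
            rw [h1]
            exact Ideal.le_comap_map)) := by
  rw [Ideal.quotientMap_injective_iff,
    Module.flat_iff_comap_maximalIdeal_smul_top_le (f := φ.toLinearMap) hφ,
    Ideal.smul_top_eq_map, Ideal.smul_top_eq_map]
  rfl
end

section
/- Let (R, 𝔪) be a local ring with 𝔪 nilpotent, and let M be an R-module. Then M is flat over R if and only if the natural multiplication map 𝔪 ⊗_R M → M is injective. -/
/-!
Lift a basis of the `R ⧸ 𝔪`-vector space `M ⧸ 𝔪M` to a map `g : R^(ι) → M`. Nakayama's lemma,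
which needs no finiteness when `𝔪` is nilpotent, makes `g` surjective, and `K := ker g` lies in
`𝔪 R^(ι)`. Tensoring `0 → K → R^(ι) → M → 0` with `𝔪` and using injectivity of `𝔪 ⊗ M → M`
shows `K ⊆ 𝔪K`, so `K = 0` by Nakayama again, and `M` is free.
-/

open TensorProduct LinearMap

namespace Submodule

variable {R M : Type*} [CommRing R] [AddCommGroup M] [Module R M] {I : Ideal R}

theorem le_of_le_smul_of_isNilpotent (hI : IsNilpotent I) {N N' : Submodule R M}
    (hNN : N' ≤ N ⊔ I • N') : N' ≤ N := by
  obtain ⟨n, hn⟩ := hI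
  have key : ∀ k : ℕ, N' ≤ N ⊔ I ^ k • N' := by
    intro k
    induction k with
    | zero => simp
    | succ k ih =>
      calc N' ≤ N ⊔ I • N' := hNN
        _ ≤ N ⊔ I • (N ⊔ I ^ k • N') := sup_le_sup_left (smul_mono_right _ ih) _
        _ = N ⊔ I • N ⊔ I ^ (k + 1) • N' := by rw [smul_sup, smul_smul, ← pow_succ', sup_assoc]
        _ = N ⊔ I ^ (k + 1) • N' := by rw [sup_eq_left.mpr (smul_le_right : I • N ≤ N)]
  simpa [hn] using key n

end Submodule

section

variable {R : Type*} [CommRing R] (I : Ideal R)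
variable {M : Type*} [AddCommGroup M] [Module R M]

theorem Ideal.range_lift_lsmul_comp_subtype :
    range (lift ((lsmul R M).comp I.subtype)) = I • ⊤ := by
  apply le_antisymm
  · rintro _ ⟨t, rfl⟩
    induction t with
    | zero => simp
    | tmul a n => simpa using Submodule.smul_mem_smul a.2 (Submodule.mem_top (x := n))
    | add x y hx hy => rw [map_add]; exact Submodule.add_mem _ hx hy
  · exact Submodule.smul_le.2 fun r hr n _ => ⟨⟨r, hr⟩ ⊗ₜ n, by simp⟩

theorem Ideal.lift_lsmul_comp_subtype_comp_lTensor {N : Type*} [AddCommGroup N] [Module R N]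
    (f : M →ₗ[R] N) :
    lift ((lsmul R N).comp I.subtype) ∘ₗ f.lTensor I = f ∘ₗ lift ((lsmul R M).comp I.subtype) := by
  ext; simp

variable {I}

theorem LinearMap.surjective_of_surjective_comp_mkQ_of_isNilpotent {N : Type*}
    [AddCommGroup N] [Module R N] (hI : IsNilpotent I) (f : M →ₗ[R] N)
    (surj : Function.Surjective ((I • (⊤ : Submodule R N)).mkQ ∘ₗ f)) : Function.Surjective f := by
  rw [← range_eq_top, ← top_le_iff]
  apply Submodule.le_of_le_smul_of_isNilpotent hI
  rw [top_le_iff, sup_comm, ← Submodule.map_mkQ_eq_top, ← range_comp]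
  exact range_eq_top_of_surjective _ surj

theorem LinearMap.injective_of_ker_le_smul_of_isNilpotent {F : Type*}
    [AddCommGroup F] [Module R F] (hI : IsNilpotent I)
    (hM : Function.Injective (lift ((lsmul R M).comp I.subtype)))
    (g : F →ₗ[R] M) (hg : Function.Surjective g) (hker : ker g ≤ I • ⊤) :
    Function.Injective g := by
  rw [← ker_eq_bot, eq_bot_iff]
  refine Submodule.le_of_le_smul_of_isNilpotent hI fun x hx => ?_
  rw [bot_sup_eq]
  obtain ⟨s, rfl⟩ : x ∈ range (lift ((lsmul R F).comp I.subtype)) := by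
    rw [Ideal.range_lift_lsmul_comp_subtype]; exact hker hx
  have hs : g.lTensor I s = 0 := hM <| by
    rw [← comp_apply, Ideal.lift_lsmul_comp_subtype_comp_lTensor, comp_apply, mem_ker.mp hx,
      map_zero]
  obtain ⟨u, rfl⟩ := (lTensor_exact I (exact_subtype_ker_map g) hg s).mp hs
  rw [← comp_apply, Ideal.lift_lsmul_comp_subtype_comp_lTensor]
  refine (Submodule.mem_smul_top_iff I (ker g) _).mp ?_
  rw [← Ideal.range_lift_lsmul_comp_subtype]
  exact mem_range_self _ u

theorem Module.free_of_isNilpotent_of_lift_lsmul_comp_subtype_injective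
    [Module.Free (R ⧸ I) (M ⧸ I • (⊤ : Submodule R M))] (hI : IsNilpotent I)
    (hM : Function.Injective (lift ((lsmul R M).comp I.subtype))) : Module.Free R M := by
  let b := Module.Free.chooseBasis (R ⧸ I) (M ⧸ I • (⊤ : Submodule R M))
  let f := (b.repr.restrictScalars R).symm.toLinearMap ∘ₗ Finsupp.mapRange.linearMap I.mkQ
  have hf : Function.Surjective f :=
    (b.repr.restrictScalars R).symm.surjective.comp
      (Finsupp.mapRange_surjective _ rfl I.mkQ_surjective)
  have hker : ker f = I • ⊤ := by
    simp only [f, LinearEquiv.ker_comp]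
    rw [Finsupp.ker_mapRange, Submodule.ker_mkQ]
    simpa using Finsupp.submodule_smul R _ (fun _ => (⊤ : Ideal R)) I
  obtain ⟨g, hg⟩ :=
    Module.projective_lifting_property (I • (⊤ : Submodule R M)).mkQ f (Submodule.mkQ_surjective _)
  have hsurj : Function.Surjective g :=
    g.surjective_of_surjective_comp_mkQ_of_isNilpotent hI (hg ▸ hf)
  have hinj : Function.Injective g := g.injective_of_ker_le_smul_of_isNilpotent hI hM hsurj <| by
    rw [← hker, ← hg, ker_comp]; exact ker_le_comap _
  exact .of_equiv (LinearEquiv.ofBijective g ⟨hinj, hsurj⟩)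

end

/-- Local flatness criterion: over a local ring `(R, 𝔪)` with `𝔪` nilpotent, a module `M`
is flat iff the multiplication map `𝔪 ⊗[R] M → M` is injective. -/
theorem stmt8 {R M : Type*} [CommRing R] [IsLocalRing R]
    (hm : IsNilpotent (IsLocalRing.maximalIdeal R))
    [AddCommGroup M] [Module R M] :
    Module.Flat R M ↔
      Function.Injective
        (TensorProduct.lift
          ((LinearMap.lsmul R M).comp (IsLocalRing.maximalIdeal R).subtype)) := by
  refine ⟨fun hflat => ?_, fun hinj => ?_⟩
  · rw [← lid_comp_rTensor]
    exact (TensorProduct.lid R M).injective.comp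
      (Module.Flat.iff_rTensor_injective'.mp hflat _)
  · -- the residue field structure on `R ⧸ 𝔪` is not a global instance
    let _ := Ideal.Quotient.field (IsLocalRing.maximalIdeal R)
    have := Module.free_of_isNilpotent_of_lift_lsmul_comp_subtype_injective hm hinj
    exact Module.Flat.of_free
end

section
/- Let 0 → (ε) → R → R₀ → 0 be a small extension of local rings, meaning R is local with maximal ideal 𝔪 and 𝔪·ε = 0, and R₀ = R/(ε). Let M be an R-module. Then M is flat over R if and only if M ⊗_R R₀ is flat over R₀ and the natural map (ε) ⊗_R M → M is injective, assuming 𝔪 is nilpotent. -/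
/-!
Let `I = (ε)`. For an ideal `J` of `R`, right exactness of `- ⊗ M` applied to
`0 → J ∩ I → J → J(R/I) → 0` reduces injectivity of `J ⊗ M → M` to two facts:
`J(R/I) ⊗_R M ≅ J(R/I) ⊗_{R/I} (R/I ⊗ M) → R/I ⊗ M` is injective by flatness of
`R/I ⊗ M` over `R/I`, and `(J ∩ I) ⊗ M → M` is injective because `𝔪ε = 0` forces
`J ∩ I` to be `0` or `(ε)`.
-/

open TensorProduct

section

variable {R S M N P : Type*} [CommRing R] [CommRing S] [Algebra R S]
  [AddCommGroup M] [Module R M]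
  [AddCommGroup N] [Module R N] [Module S N] [IsScalarTower R S N]
  [AddCommGroup P] [Module R P] [Module S P] [IsScalarTower R S P]

theorem LinearMap.rTensor_restrictScalars_cancelBaseChange (f : N →ₗ[S] P)
    (x : N ⊗[S] (S ⊗[R] M)) :
    (f.restrictScalars R).rTensor M (AlgebraTensorModule.cancelBaseChange R S S N M x) =
      AlgebraTensorModule.cancelBaseChange R S S P M (f.rTensor (S ⊗[R] M) x) := by
  induction x using TensorProduct.induction_on with
  | zero => simp
  | tmul n y =>
    induction y using TensorProduct.induction_on with
    | zero => simp
    | tmul s m => simp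
    | add y z hy hz => simp only [tmul_add, map_add, hy, hz]
  | add x y hx hy => simp only [map_add, hx, hy]

theorem Module.Flat.rTensor_restrictScalars_injective_of_flat_baseChange
    [Module.Flat S (S ⊗[R] M)] {f : N →ₗ[S] P} (hf : Function.Injective f) :
    Function.Injective ((f.restrictScalars R).rTensor M) := by
  intro x y hxy
  obtain ⟨x, rfl⟩ := (AlgebraTensorModule.cancelBaseChange R S S N M).surjective x
  obtain ⟨y, rfl⟩ := (AlgebraTensorModule.cancelBaseChange R S S N M).surjective y
  rw [LinearMap.rTensor_restrictScalars_cancelBaseChange,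
    LinearMap.rTensor_restrictScalars_cancelBaseChange] at hxy
  rw [Module.Flat.rTensor_preserves_injective_linearMap f hf
    ((AlgebraTensorModule.cancelBaseChange R S S P M).injective hxy)]

end

section

variable {R M : Type*} [CommRing R] [AddCommGroup M] [Module R M]

theorem Module.Flat.of_flat_quotient_of_rTensor_injective (I : Ideal R)
    [Module.Flat (R ⧸ I) ((R ⧸ I) ⊗[R] M)]
    (hI : ∀ K : Ideal R, K ≤ I → Function.Injective (K.subtype.rTensor M)) :
    Module.Flat R M := by
  rw [Module.Flat.iff_rTensor_injective']
  intro J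
  rw [injective_iff_map_eq_zero]
  intro x hx
  let J' : Ideal (R ⧸ I) := J.map (Ideal.Quotient.mk I)
  let q : J →ₗ[R] J' := ((Ideal.Quotient.mkₐ R I).toLinearMap ∘ₗ J.subtype).codRestrict
    (J'.restrictScalars R) fun j ↦ Ideal.mem_map_of_mem _ j.2
  have hq : Function.Surjective q := by
    rintro ⟨_, hy⟩
    obtain ⟨a, ha, rfl⟩ :=
      (Ideal.mem_map_iff_of_surjective _ Ideal.Quotient.mk_surjective).mp hy
    exact ⟨⟨a, ha⟩, rfl⟩
  have hexact : Function.Exact (Submodule.inclusion inf_le_left : ↥(J ⊓ I) →ₗ[R] J) q := by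
    intro a
    constructor
    · intro h
      exact ⟨⟨a, a.2, Ideal.Quotient.eq_zero_iff_mem.mp (congrArg Subtype.val h)⟩, rfl⟩
    · rintro ⟨⟨b, -, hbI⟩, rfl⟩
      exact Subtype.ext (Ideal.Quotient.eq_zero_iff_mem.mpr hbI)
  have hqx : q.rTensor M x = 0 := by
    apply Module.Flat.rTensor_restrictScalars_injective_of_flat_baseChange
      (f := J'.subtype) Subtype.val_injective
    rw [← LinearMap.rTensor_comp_apply, map_zero]
    change ((Ideal.Quotient.mkₐ R I).toLinearMap ∘ₗ J.subtype).rTensor M x = 0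
    rw [LinearMap.rTensor_comp_apply, hx, map_zero]
  obtain ⟨y, rfl⟩ := (_root_.rTensor_exact M hexact hq x).mp hqx
  have hy : (J ⊓ I).subtype.rTensor M y = 0 := by
    rwa [← LinearMap.rTensor_comp_apply] at hx
  rw [hI _ inf_le_right (hy.trans (map_zero _).symm), map_zero]

theorem IsLocalRing.eq_bot_or_eq_span_singleton_of_le [IsLocalRing R] {ε : R}
    (hann : ∀ m ∈ IsLocalRing.maximalIdeal R, m * ε = 0) {K : Ideal R}
    (hK : K ≤ Ideal.span {ε}) : K = ⊥ ∨ K = Ideal.span {ε} := by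
  refine or_iff_not_imp_left.mpr fun hK_ne ↦ le_antisymm hK ?_
  obtain ⟨x, hxK, hx⟩ := Submodule.exists_mem_ne_zero_of_ne_bot hK_ne
  obtain ⟨r, rfl⟩ := Ideal.mem_span_singleton'.mp (hK hxK)
  have hr : IsUnit r := by
    by_contra hr
    exact hx (hann r ((IsLocalRing.mem_maximalIdeal r).mpr hr))
  rw [Ideal.span_singleton_le_iff_mem, ← hr.unit.inv_mul_cancel_left ε]
  exact K.mul_mem_left _ hxK

end

theorem stmt9_general {R M : Type*} [CommRing R] [IsLocalRing R]
    (ε : R)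
    (hann : ∀ m ∈ IsLocalRing.maximalIdeal R, m * ε = 0)
    [AddCommGroup M] [Module R M] :
    Module.Flat R M ↔
      Module.Flat (R ⧸ Ideal.span {ε}) ((R ⧸ Ideal.span {ε}) ⊗[R] M) ∧
      Function.Injective
        (TensorProduct.lift
          ((LinearMap.lsmul R M).comp (Ideal.span {ε} : Ideal R).subtype)) := by
  simp_rw [← LinearMap.lid_comp_rTensor, LinearMap.coe_comp, LinearEquiv.coe_coe,
    (TensorProduct.lid R M).injective.of_comp_iff]
  refine ⟨fun hM ↦ ⟨inferInstance, Module.Flat.rTensor_preserves_injective_linearMap _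
    Subtype.val_injective⟩, fun ⟨_, hε⟩ ↦ ?_⟩
  refine Module.Flat.of_flat_quotient_of_rTensor_injective (Ideal.span {ε}) fun K hK ↦ ?_
  rcases IsLocalRing.eq_bot_or_eq_span_singleton_of_le hann hK with rfl | rfl
  · exact Function.injective_of_subsingleton _
  · exact hε

/-- Flatness along a small extension: let `(R, 𝔪)` be a local ring with `𝔪` nilpotent,
`ε ∈ 𝔪` with `𝔪 ε = 0`, and `R₀ = R/(ε)`.  An `R`-module `M` is flat iff `R₀ ⊗[R] M` is
flat over `R₀` and the multiplication map `(ε) ⊗[R] M → M` is injective. -/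
theorem stmt9 {R M : Type*} [CommRing R] [IsLocalRing R]
    (hm : IsNilpotent (IsLocalRing.maximalIdeal R))
    (ε : R) (hε : ε ∈ IsLocalRing.maximalIdeal R)
    (hann : ∀ m ∈ IsLocalRing.maximalIdeal R, m * ε = 0)
    [AddCommGroup M] [Module R M] :
    Module.Flat R M ↔
      Module.Flat (R ⧸ Ideal.span {ε}) ((R ⧸ Ideal.span {ε}) ⊗[R] M) ∧
      Function.Injective
        (TensorProduct.lift
          ((LinearMap.lsmul R M).comp (Ideal.span {ε} : Ideal R).subtype)) :=
  stmt9_general ε hann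
end

section
/- Let (R, 𝔪) be an Artinian local ring with residue field k, let A be an R-algebra, and let (I_j)_{j ∈ ι} be a family of ideals of A such that: (a) each A/I_j is a finite flat R-module with (A/I_j) ⊗_R k reduced; (b) I_i + I_j = A for i ≠ j; (c) ⋂_j I_j = 0. If A is flat over R, then A ⊗_R k is reduced. -/
open TensorProduct

/-- If `A` is flat over `R` and `r • a = 0`, then `a ∈ ann(r) • A`. -/
lemma flat_smul_eq_zero_mem {R A : Type*} [CommRing R] [CommRing A] [Algebra R A]
    [Module.Flat R A] (r : R) (a : A) (h : r • a = 0) :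
    a ∈ (LinearMap.ker (LinearMap.lsmul R R r) : Ideal R) • (⊤ : Submodule R A) := by
  set c : Ideal R := LinearMap.ker (LinearMap.lsmul R R r)
  have hex := Module.Flat.lTensor_exact A
    (LinearMap.exact_subtype_ker_map (LinearMap.lsmul R R r))
  have h0 : (LinearMap.lsmul R R r).lTensor A (a ⊗ₜ[R] (1 : R)) = 0 := by
    have : (LinearMap.lsmul R R r) (1 : R) = r • (1 : R) := rfl
    rw [LinearMap.lTensor_tmul, this, tmul_smul, smul_tmul', h, zero_tmul]
  obtain ⟨z, hz⟩ := (hex (a ⊗ₜ[R] (1 : R))).mp h0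
  have key : ∀ w : A ⊗[R] c,
      (TensorProduct.rid R A) ((c.subtype).lTensor A w) ∈ c • (⊤ : Submodule R A) := by
    intro w
    induction w using TensorProduct.induction_on with
    | zero => simp
    | tmul b s =>
        rw [LinearMap.lTensor_tmul]
        simpa using Submodule.smul_mem_smul s.2 (Submodule.mem_top (x := b))
    | add u v hu hv => rw [map_add, map_add]; exact Submodule.add_mem _ hu hv
  have : (TensorProduct.rid R A) ((c.subtype).lTensor A z)
      = (TensorProduct.rid R A) (a ⊗ₜ[R] (1 : R)) := by rw [hz]
  have ha : (TensorProduct.rid R A) (a ⊗ₜ[R] (1 : R)) = a := by simp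
  have hk := key z
  rw [this, ha] at hk
  exact hk

/-- Let `(R, 𝔪)` be an Artinian local ring with residue field `k = R/𝔪`, `A` an `R`-algebra,
and `(I j)` a family of ideals of `A` such that each `A/I j` is finite flat over `R` with
reduced special fiber, the `I j` are pairwise comaximal, and `⋂ I j = 0`.  If `A` is flat
over `R`, then `A ⊗[R] k` is reduced. -/
theorem stmt10 {R A : Type*} [CommRing R] [IsArtinianRing R] [IsLocalRing R]
    [CommRing A] [Algebra R A] {ι : Type*} (I : ι → Ideal A)
    (hfin : ∀ j, Module.Finite R (A ⧸ I j))
    (hflat : ∀ j, Module.Flat R (A ⧸ I j))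
    (hred : ∀ j, IsReduced ((A ⧸ I j) ⊗[R] (R ⧸ IsLocalRing.maximalIdeal R)))
    (hcop : ∀ i j, i ≠ j → I i + I j = ⊤)
    (hint : ⨅ j, I j = ⊥)
    [Module.Flat R A] :
    IsReduced (A ⊗[R] (R ⧸ IsLocalRing.maximalIdeal R)) := by
  classical
  set m : Ideal R := IsLocalRing.maximalIdeal R with hm
  rcases subsingleton_or_nontrivial R with hR | hR
  · have : Subsingleton (A ⊗[R] (R ⧸ m)) := Module.subsingleton R _
    exact ⟨fun x _ => Subsingleton.elim x 0⟩
  constructor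
  intro x hx
  -- `m` is nilpotent; take `N` minimal with `m ^ N = ⊥`
  have hnil : IsNilpotent m := by
    have h1 := IsArtinianRing.isNilpotent_jacobson_bot (R := R)
    rwa [IsLocalRing.jacobson_eq_maximalIdeal ⊥ bot_ne_top] at h1
  have hex : ∃ n, m ^ n = ⊥ := hnil
  set N := Nat.find hex with hNdef
  have hN : m ^ N = ⊥ := Nat.find_spec hex
  have hN1 : 1 ≤ N := by
    rcases Nat.eq_zero_or_pos N with h0 | h
    · exfalso
      have hb := hN
      rw [h0, pow_zero, Ideal.one_eq_top] at hb
      have h1 : (1 : R) ∈ (⊥ : Ideal R) := hb ▸ Submodule.mem_top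
      rw [Submodule.mem_bot] at h1
      exact one_ne_zero h1
    · exact h
  have hNm : m ^ (N - 1) ≠ ⊥ := Nat.find_min hex (by omega)
  obtain ⟨r, hr, hr0⟩ := Submodule.exists_mem_ne_zero_of_ne_bot hNm
  -- key: `r` kills `m`
  have hrm : ∀ s ∈ m, r * s = 0 := by
    intro s hs
    have : r * s ∈ m ^ (N - 1) * m := Ideal.mul_mem_mul hr hs
    rw [← pow_succ, Nat.sub_add_cancel hN1, hN] at this
    exact this
  -- lift x to an element a of A
  set e := TensorProduct.tensorQuotEquivQuotSMul A m with he
  obtain ⟨a, ha⟩ := Submodule.Quotient.mk_surjective _ (e x)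
  have hxa : x = a ⊗ₜ[R] (1 : R ⧸ m) := by
    have := congrArg e.symm ha
    rw [LinearEquiv.symm_apply_apply] at this
    rw [← this, TensorProduct.tensorQuotEquivQuotSMul_symm_mk]
  -- in each quotient, a maps into m • ⊤
  have hstep : ∀ j, r • a ∈ I j := by
    intro j
    set φ : A ⊗[R] (R ⧸ m) →ₐ[R] (A ⧸ I j) ⊗[R] (R ⧸ m) :=
      Algebra.TensorProduct.map (Ideal.Quotient.mkₐ R (I j)) (AlgHom.id R (R ⧸ m)) with hφ
    have hφ0 : φ x = 0 := (hred j).eq_zero _ (hx.map φ)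
    have hφx : φ x = (Ideal.Quotient.mk (I j) a) ⊗ₜ[R] (1 : R ⧸ m) := by
      rw [hxa, hφ]
      simp [Algebra.TensorProduct.map_tmul]
    have hmem : (Ideal.Quotient.mk (I j) a : A ⧸ I j)
        ∈ m • (⊤ : Submodule R (A ⧸ I j)) := by
      have h0' : (TensorProduct.tensorQuotEquivQuotSMul (A ⧸ I j) m).symm
          (Submodule.Quotient.mk (Ideal.Quotient.mk (I j) a)) = 0 := by
        rw [TensorProduct.tensorQuotEquivQuotSMul_symm_mk]
        exact hφx.symm.trans hφ0
      have h2 := (LinearEquiv.map_eq_zero_iff _).mp h0'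
      rwa [Submodule.Quotient.mk_eq_zero] at h2
    -- r kills m • ⊤
    have hz : r • (Ideal.Quotient.mk (I j) a : A ⧸ I j) = 0 := by
      refine Submodule.smul_induction_on hmem (fun s hs w _ => ?_) (fun y z hy hz => ?_)
      · rw [smul_smul, hrm s hs, zero_smul]
      · rw [smul_add, hy, hz, add_zero]
    have : (Ideal.Quotient.mkₐ R (I j)) (r • a) = 0 := by
      rw [map_smul]; exact hz
    rw [Ideal.Quotient.mkₐ_eq_mk, Ideal.Quotient.eq_zero_iff_mem] at this
    exact this
  -- hence r • a = 0
  have hra : r • a = 0 := by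
    have : r • a ∈ ⨅ j, I j := Submodule.mem_iInf _ |>.mpr hstep
    rw [hint] at this
    exact this
  -- flatness: a ∈ ann(r) • ⊤ ⊆ m • ⊤
  have hann := flat_smul_eq_zero_mem r a hra
  have hle : (LinearMap.ker (LinearMap.lsmul R R r) : Ideal R) ≤ m := by
    apply IsLocalRing.le_maximalIdeal
    intro htop
    have h1 : (1 : R) ∈ (LinearMap.ker (LinearMap.lsmul R R r) : Ideal R) := by
      rw [htop]; trivial
    have : r • (1 : R) = 0 := h1
    rw [smul_eq_mul, mul_one] at this
    exact hr0 this
  have hma : a ∈ m • (⊤ : Submodule R A) :=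
    Submodule.smul_mono_left hle hann
  have hex0 : e x = 0 := by
    rw [← ha]
    exact (Submodule.Quotient.mk_eq_zero _).mpr hma
  exact (LinearEquiv.map_eq_zero_iff e).mp hex0
end
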